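/- Fix $N \ge 1$, $K = 1$, and constants $M, A \ge 0$. Define $S(N, A) = \min \sum_{n=0}^{N-1} \eta_n^2 A_n^2$ over all $(\eta_0,\dots,\eta_{N-1}) \in [0,1]^N$ with $\eta_{N-1} = 1$, where $A_0 = A$ and $A_{n+1} = (1-\eta_n)A_n + M$. Then $S(N, A) = \frac{1}{N}(A + (N-1)M)^2$ if $A \ge M$, and $S(N, A) = A^2 + (N-1)M^2$ if $A < M$. In both cases $S(N,A) \le \frac{2}{N}(A + (N-1)M)^2$. -/

import Mathlib

noncomputable section

/-- The sequence `A_n` of the shift-optimization problem. -/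
def shiftA (K M A : ℝ) (η : ℕ → ℝ) : ℕ → ℝ
  | 0 => A
  | (n + 1) => K * (1 - η n) * shiftA K M A η n + M

/-- The objective of the shift-optimization problem. -/
def shiftObj (K M A : ℝ) (N : ℕ) (η : ℕ → ℝ) : ℝ :=
  ∑ n ∈ Finset.range N, (η n) ^ 2 * (shiftA K M A η n) ^ 2

/-- The value `S(N, A)` of the shift-optimization problem. -/
def Sval (K M A : ℝ) (N : ℕ) : ℝ :=
  sInf {s : ℝ | ∃ η : ℕ → ℝ, (∀ n < N, 0 ≤ η n ∧ η n ≤ 1) ∧ η (N - 1) = 1 ∧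
    s = shiftObj K M A N η}

end

/-! With `b n = η n * A n`, the recursion for `K = 1` reads `A (n+1) = A n - b n + M`, so
`A n + ∑_{k<n} b k = A + n M`. The constraint `η (N-1) = 1` then forces
`∑_{n<N} b n = A + (N-1) M =: T`, while the objective is `∑ b n ^ 2`.

Cauchy–Schwarz bounds the objective below by `T ^ 2 / N`; equality needs `b n ≡ T / N`, i.e.
`η n = c / (A - n (c - M))` with `c = T / N`, which lies in `[0, 1]` exactly when `M ≤ A`.
If `A < M`, then `b 0 ≤ A` and `b n ^ 2 ≥ 2 M b n - M ^ 2` give the bound `A ^ 2 + (N-1) M ^ 2`,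
attained by `η ≡ 1`. -/

open Finset

section ShiftIdentities

variable {M A : ℝ} {η : ℕ → ℝ}

lemma shiftA_one_succ (n : ℕ) :
    shiftA 1 M A η (n + 1) = (1 - η n) * shiftA 1 M A η n + M := by
  rw [shiftA, one_mul]

lemma shiftObj_eq_sum_sq (K : ℝ) (N : ℕ) :
    shiftObj K M A N η = ∑ n ∈ range N, (η n * shiftA K M A η n) ^ 2 := by
  simp only [shiftObj, mul_pow]

lemma shiftA_one_add_sum (n : ℕ) :
    shiftA 1 M A η n + ∑ k ∈ range n, η k * shiftA 1 M A η k = A + n * M := by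
  induction n with
  | zero => simp [shiftA]
  | succ n ih =>
    rw [sum_range_succ, shiftA_one_succ]
    push_cast
    linear_combination ih

lemma sum_mul_shiftA_one_of_eq_one {m : ℕ} (hlast : η m = 1) :
    ∑ n ∈ range (m + 1), η n * shiftA 1 M A η n = A + m * M := by
  rw [sum_range_succ, hlast, one_mul, add_comm]
  exact shiftA_one_add_sum m

end ShiftIdentities

lemma sq_add_mul_sq_le_sum_sq {M A : ℝ} {b : ℕ → ℝ} (m : ℕ) (hAM : A ≤ M) (hb0 : b 0 ≤ A)
    (hsum : ∑ n ∈ range (m + 1), b n = A + m * M) :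
    A ^ 2 + m * M ^ 2 ≤ ∑ n ∈ range (m + 1), b n ^ 2 := by
  rw [sum_range_succ'] at hsum ⊢
  have htail : ∑ n ∈ range m, (2 * M * b (n + 1) - M ^ 2) ≤ ∑ n ∈ range m, b (n + 1) ^ 2 :=
    sum_le_sum fun n _ => by nlinarith [sq_nonneg (b (n + 1) - M)]
  have htail_sum : ∑ n ∈ range m, b (n + 1) = A + m * M - b 0 := by linarith
  rw [sum_sub_distrib, ← mul_sum, htail_sum, sum_const, card_range, nsmul_eq_mul] at htail
  nlinarith [mul_nonneg (sub_nonneg.2 hb0) (by linarith : 0 ≤ 2 * M - A - b 0)]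

section LowerBounds

variable {M A : ℝ} {η : ℕ → ℝ} {m : ℕ}

lemma sq_div_le_shiftObj (hlast : η m = 1) :
    (A + m * M) ^ 2 / (m + 1) ≤ shiftObj 1 M A (m + 1) η := by
  have hcs := sq_sum_le_card_mul_sum_sq (s := range (m + 1)) (f := fun n => η n * shiftA 1 M A η n)
  rw [sum_mul_shiftA_one_of_eq_one hlast, card_range, Nat.cast_succ] at hcs
  rw [shiftObj_eq_sum_sq, div_le_iff₀' (by positivity)]
  exact hcs

lemma sq_add_mul_sq_le_shiftObj (hAM : A ≤ M) (hA : 0 ≤ A) (h0 : η 0 ≤ 1) (hlast : η m = 1) :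
    A ^ 2 + m * M ^ 2 ≤ shiftObj 1 M A (m + 1) η := by
  rw [shiftObj_eq_sum_sq]
  refine sq_add_mul_sq_le_sum_sq m hAM ?_ (sum_mul_shiftA_one_of_eq_one hlast)
  exact mul_le_of_le_one_left hA h0

end LowerBounds

section Minimizers

variable {M A : ℝ}

lemma shiftObj_one_const (m : ℕ) :
    shiftObj 1 M A (m + 1) (fun _ => 1) = A ^ 2 + m * M ^ 2 := by
  have hstep (n : ℕ) : shiftA 1 M A (fun _ => 1) (n + 1) = M := by
    rw [shiftA_one_succ]; ring
  rw [shiftObj_eq_sum_sq, sum_range_succ']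
  simp only [hstep, one_mul, sum_const, card_range, nsmul_eq_mul]
  rw [shiftA, add_comm]

/-- The schedule keeping every summand `η n * A n` equal to `c`: then `A n = A - n (c - M)`. -/
noncomputable def equalizingShift (M A c : ℝ) (n : ℕ) : ℝ := c / (A - n * (c - M))

variable {c : ℝ} {m : ℕ}

lemma le_sub_mul_of_le (hMc : M ≤ c) (hT : A + m * M = (m + 1) * c) {n : ℕ} (hn : n ≤ m) :
    c ≤ A - n * (c - M) := by
  have hn' : (n : ℝ) ≤ m := by exact_mod_cast hn
  nlinarith [mul_nonneg (sub_nonneg.2 hn') (sub_nonneg.2 hMc)]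

lemma shiftA_equalizingShift (hc : 0 < c) (hMc : M ≤ c) (hT : A + m * M = (m + 1) * c) {n : ℕ}
    (hn : n ≤ m) : shiftA 1 M A (equalizingShift M A c) n = A - n * (c - M) := by
  induction n with
  | zero => simp [shiftA]
  | succ n ih =>
    have hpos : 0 < A - n * (c - M) := hc.trans_le (le_sub_mul_of_le hMc hT (by omega))
    rw [shiftA_one_succ, ih (by omega), equalizingShift, sub_mul, div_mul_cancel₀ _ hpos.ne']
    push_cast
    ring

lemma equalizingShift_mem_Icc (hc : 0 < c) (hMc : M ≤ c) (hT : A + m * M = (m + 1) * c) {n : ℕ}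
    (hn : n ≤ m) : equalizingShift M A c n ∈ Set.Icc 0 1 := by
  have hle := le_sub_mul_of_le hMc hT hn
  exact ⟨div_nonneg hc.le (hc.le.trans hle), div_le_one_of_le₀ hle (hc.le.trans hle)⟩

lemma equalizingShift_last (hc : 0 < c) (hT : A + m * M = (m + 1) * c) :
    equalizingShift M A c m = 1 := by
  rw [equalizingShift, show A - m * (c - M) = c by linarith, div_self hc.ne']

lemma shiftObj_equalizingShift (hc : 0 < c) (hMc : M ≤ c) (hT : A + m * M = (m + 1) * c) :
    shiftObj 1 M A (m + 1) (equalizingShift M A c) = (m + 1) * c ^ 2 := by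
  have hterm : ∀ n ∈ range (m + 1),
      (equalizingShift M A c n * shiftA 1 M A (equalizingShift M A c) n) ^ 2 = c ^ 2 := by
    intro n hn
    have hn : n ≤ m := Nat.lt_succ_iff.1 (mem_range.1 hn)
    have hpos := hc.trans_le (le_sub_mul_of_le hMc hT hn)
    rw [shiftA_equalizingShift hc hMc hT hn, equalizingShift, div_mul_cancel₀ _ hpos.ne']
  rw [shiftObj_eq_sum_sq, sum_congr rfl hterm, sum_const, card_range, nsmul_eq_mul]
  push_cast
  ring

end Minimizers

/-- The set whose infimum is `Sval 1 M A (m + 1)`, indexed by `m = N - 1`. -/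
def feasibleShiftObj (M A : ℝ) (m : ℕ) : Set ℝ :=
  {s | ∃ η : ℕ → ℝ, (∀ n < m + 1, 0 ≤ η n ∧ η n ≤ 1) ∧ η m = 1 ∧ s = shiftObj 1 M A (m + 1) η}

lemma sq_div_mem_feasibleShiftObj {M A : ℝ} (m : ℕ) (hM : 0 ≤ M) (hMA : M ≤ A) :
    (A + m * M) ^ 2 / (m + 1) ∈ feasibleShiftObj M A m := by
  rcases (hM.trans hMA).eq_or_lt with rfl | hA
  · obtain rfl : M = 0 := le_antisymm hMA hM
    exact ⟨fun _ => 1, fun _ _ => ⟨zero_le_one, le_rfl⟩, rfl, by rw [shiftObj_one_const]; simp⟩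
  · set c := (A + m * M) / (m + 1)
    have hT : A + m * M = (m + 1) * c := (mul_div_cancel₀ _ (by positivity)).symm
    have hMc : M ≤ c := by rw [le_div_iff₀ (by positivity)]; linarith
    have hc : 0 < c := div_pos (add_pos_of_pos_of_nonneg hA (by positivity)) (by positivity)
    refine ⟨equalizingShift M A c, fun n hn => equalizingShift_mem_Icc hc hMc hT (by omega),
      equalizingShift_last hc hT, ?_⟩
    rw [shiftObj_equalizingShift hc hMc hT, hT]
    field_simp

lemma isLeast_feasibleShiftObj {M A : ℝ} (m : ℕ) (hM : 0 ≤ M) (hA : 0 ≤ A) :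
    IsLeast (feasibleShiftObj M A m)
      (if M ≤ A then (A + m * M) ^ 2 / (m + 1) else A ^ 2 + m * M ^ 2) := by
  split_ifs with hMA
  · refine ⟨sq_div_mem_feasibleShiftObj m hM hMA, ?_⟩
    rintro _ ⟨η, -, hlast, rfl⟩
    exact sq_div_le_shiftObj hlast
  · refine ⟨⟨fun _ => 1, fun _ _ => ⟨zero_le_one, le_rfl⟩, rfl, (shiftObj_one_const m).symm⟩, ?_⟩
    rintro _ ⟨η, hfeas, hlast, rfl⟩
    exact sq_add_mul_sq_le_shiftObj (not_le.1 hMA).le hA (hfeas 0 m.succ_pos).2 hlast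

lemma sq_add_mul_sq_le_two_div {M A : ℝ} (m : ℕ) (hAM : A ≤ M) (hA : 0 ≤ A) :
    A ^ 2 + m * M ^ 2 ≤ 2 / (m + 1) * (A + m * M) ^ 2 := by
  rw [div_mul_eq_mul_div, le_div_iff₀ (by positivity)]
  have hm : (0 : ℝ) ≤ m * (m - 1) := by
    rcases m.eq_zero_or_pos with rfl | hm
    · simp
    · exact mul_nonneg m.cast_nonneg (sub_nonneg.2 (by exact_mod_cast hm))
  nlinarith [mul_nonneg hm (sub_nonneg.2 (pow_le_pow_left₀ hA hAM 2)), sq_nonneg ((m - 1) * A),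
    mul_nonneg (mul_nonneg m.cast_nonneg hA) (hA.trans hAM)]

theorem statement_9 (N : ℕ) (hN : 1 ≤ N) (M A : ℝ) (hM : 0 ≤ M) (hA : 0 ≤ A) :
    (Sval 1 M A N =
      if M ≤ A then (A + ((N : ℝ) - 1) * M) ^ 2 / N else A ^ 2 + ((N : ℝ) - 1) * M ^ 2) ∧
    Sval 1 M A N ≤ 2 / N * (A + ((N : ℝ) - 1) * M) ^ 2 := by
  obtain ⟨m, rfl⟩ := Nat.exists_eq_add_of_le' hN
  have hSval : Sval 1 M A (m + 1) =
      if M ≤ A then (A + m * M) ^ 2 / (m + 1) else A ^ 2 + m * M ^ 2 :=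
    (isLeast_feasibleShiftObj m hM hA).csInf_eq
  have hm : ((m + 1 : ℕ) : ℝ) - 1 = m := by push_cast; ring
  rw [hm, hSval, Nat.cast_succ]
  refine ⟨rfl, ?_⟩
  split_ifs with hMA
  · rw [div_mul_eq_mul_div]
    gcongr
    linarith [sq_nonneg (A + m * M)]
  · exact sq_add_mul_sq_le_two_div m (not_le.1 hMA).le hA
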